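/- arXiv:math/0602466 — 4 statements merged into one kernel-verified Lean document; each statement's English description precedes it below -/
import Mathlib

section
/- Let S be a round sphere in ℝ³ and let C = S ∩ P be a single round circle contained in S, where P is a 2-dimensional affine subspace of ℝ³ whose distance from the center of S is strictly less than the radius of S. Then S \ C, as a topological subspace, has exactly two connected components. -/
/-!
Write the plane as `{x | ⟪n, x - c⟫ = t}` with `‖n‖ = 1`; the distance hypothesis says `|t| < R`.
The sphere minus the circle is then the disjoint union of the two caps `t < ⟪n, x - c⟫` and
`⟪n, x - c⟫ < t`, each open in it, so it remains to see that a cap is connected. The cap is the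
radial projection from `c` of the cone `{y | t * ‖y‖ < R * ⟪n, y⟫}`, and this cone is star-convex
about `n`, by the triangle inequality.
-/

open Metric
open scoped RealInnerProductSpace

section Topology

variable {X : Type*} [TopologicalSpace X]

theorem IsClopen.connectedComponent_eq {U : Set X} (hU : IsClopen U) (hU' : IsPreconnected U)
    {x : X} (hx : x ∈ U) : connectedComponent x = U :=
  (hU.connectedComponent_subset hx).antisymm (hU'.subset_connectedComponent hx)

theorem cardinalMk_connectedComponents_eq_two {U V : Set X} (hUo : IsOpen U) (hVo : IsOpen V)
    (hUV : IsCompl U V) (hU : IsConnected U) (hV : IsConnected V) :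
    Cardinal.mk (ConnectedComponents X) = 2 := by
  have hUc : IsClopen U := ⟨isOpen_compl_iff.1 (hUV.compl_eq ▸ hVo), hUo⟩
  have hVc : IsClopen V := ⟨isOpen_compl_iff.1 (hUV.symm.compl_eq ▸ hUo), hVo⟩
  obtain ⟨a, ha⟩ := hU.nonempty
  obtain ⟨b, hb⟩ := hV.nonempty
  refine Cardinal.mk_eq_two_iff.2 ⟨.mk a, .mk b, fun hab => ?_, ?_⟩
  · rw [ConnectedComponents.coe_eq_coe, hUc.connectedComponent_eq hU.2 ha,
      hVc.connectedComponent_eq hV.2 hb] at hab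
    exact Set.disjoint_left.1 hUV.disjoint ha (hab ▸ ha)
  · refine Set.eq_univ_of_forall fun z => ?_
    obtain ⟨x, rfl⟩ := ConnectedComponents.surjective_coe z
    rcases hUV.codisjoint.top_le (Set.mem_univ x) with hx | hx
    · exact .inl (ConnectedComponents.coe_eq_coe.2 (by
        rw [hUc.connectedComponent_eq hU.2 hx, hUc.connectedComponent_eq hU.2 ha]))
    · exact .inr (ConnectedComponents.coe_eq_coe.2 (by
        rw [hVc.connectedComponent_eq hV.2 hx, hVc.connectedComponent_eq hV.2 hb]))

end Topology

section InnerProductSpace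

variable {E : Type*} [NormedAddCommGroup E] [InnerProductSpace ℝ E]

theorem starConvex_setOf_mul_norm_lt_inner {n : E} (hn : ‖n‖ = 1) {R t : ℝ} (ht : |t| < R) :
    StarConvex ℝ n {y : E | t * ‖y‖ < R * ⟪n, y⟫} := by
  intro y hy a b ha hb hab
  have hinner : ⟪n, a • n + b • y⟫ = a + b * ⟪n, y⟫ := by
    simp [inner_add_right, inner_smul_right, hn]
  have hnorm_an : ‖a • n‖ = a := by rw [norm_smul, hn, Real.norm_of_nonneg ha, mul_one]
  have hnorm_by : ‖b • y‖ = b * ‖y‖ := by rw [norm_smul, Real.norm_of_nonneg hb]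
  have hle : ‖a • n + b • y‖ ≤ a + b * ‖y‖ := by
    simpa only [hnorm_an, hnorm_by] using norm_add_le (a • n) (b • y)
  have hge : b * ‖y‖ - a ≤ ‖a • n + b • y‖ := by
    rw [add_comm]
    simpa only [hnorm_an, hnorm_by] using norm_sub_le_norm_add (b • y) (a • n)
  -- the strict inequality comes from `n` when `b = 0` and from `y` when `b > 0`
  have hlin : |t| * a + b * (t * ‖y‖) < R * a + b * (R * ⟪n, y⟫) := by
    rcases hb.eq_or_lt with rfl | hb
    · nlinarith
    · nlinarith [mul_lt_mul_of_pos_left hy hb, mul_le_mul_of_nonneg_left ht.le ha]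
  simp only [Set.mem_ofPred_eq, hinner]
  rcases le_or_gt 0 t with ht0 | ht0
  · rw [abs_of_nonneg ht0] at hlin
    nlinarith [mul_le_mul_of_nonneg_left hle ht0]
  · rw [abs_of_neg ht0] at hlin
    nlinarith [mul_le_mul_of_nonpos_left hge ht0.le]

theorem isPathConnected_sphere_inter_setOf_lt_inner (c : E) {n : E} (hn : ‖n‖ = 1) {R t : ℝ}
    (ht : |t| < R) : IsPathConnected (sphere c R ∩ {x | t < ⟪n, x - c⟫}) := by
  set K := {y : E | t * ‖y‖ < R * ⟪n, y⟫}
  have hR : 0 < R := (abs_nonneg t).trans_lt ht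
  have hK : IsPathConnected K :=
    (starConvex_setOf_mul_norm_lt_inner hn ht).isPathConnected (by
      simpa [K, real_inner_self_eq_norm_sq, hn] using (le_abs_self t).trans_lt ht)
  have hK0 : ∀ y ∈ K, 0 < ‖y‖ := fun y hy =>
    norm_pos_iff.2 fun h => by simp [K, h] at hy
  have hcont : ContinuousOn (fun y : E => c + (R / ‖y‖) • y) K :=
    continuousOn_const.add <| (continuousOn_const.div continuousOn_id.norm
      fun y hy => (hK0 y hy).ne').smul continuousOn_id
  convert hK.image' hcont using 1
  ext x
  constructor
  · rintro ⟨hx, hxt⟩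
    have hx : ‖x - c‖ = R := by rwa [mem_sphere, dist_eq_norm] at hx
    refine ⟨x - c, ?_, by simp [hx, hR.ne']⟩
    simp only [K, Set.mem_ofPred_eq, hx]
    exact mul_lt_mul_of_pos_right hxt hR |>.trans_eq (mul_comm _ _)
  · rintro ⟨y, hy, rfl⟩
    have hy0 := hK0 y hy
    refine ⟨?_, ?_⟩
    · simp [norm_smul, abs_of_pos hR, hy0.ne']
    · simp only [Set.mem_ofPred_eq, add_sub_cancel_left, inner_smul_right]
      rw [div_mul_eq_mul_div, lt_div_iff₀ hy0]
      exact hy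

theorem cardinalMk_connectedComponents_sphere_diff_setOf_inner_eq (c : E) {n : E}
    (hn : ‖n‖ = 1) {R t : ℝ} (ht : |t| < R) :
    Cardinal.mk (ConnectedComponents ↥(sphere c R \ {x | ⟪n, x - c⟫ = t})) = 2 := by
  set W := sphere c R \ {x | ⟪n, x - c⟫ = t}
  have hf : Continuous fun x : W => ⟪n, (x : E) - c⟫ := by fun_prop
  have hcap : ∀ {m : E} {s : ℝ}, ‖m‖ = 1 → |s| < R →
      (∀ x : E, s < ⟪m, x - c⟫ → ⟪n, x - c⟫ ≠ t) →
      IsConnected {x : W | s < ⟪m, (x : E) - c⟫} := fun hm hs hst => by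
    convert ((isPathConnected_sphere_inter_setOf_lt_inner c hm hs).preimage_coe
      fun x hx => show x ∈ W from ⟨hx.1, hst x hx.2⟩).isConnected using 1
    ext x
    simp only [Set.mem_preimage, Set.mem_inter_iff, x.2.1, true_and]
    rfl
  refine cardinalMk_connectedComponents_eq_two (U := {x : W | t < ⟪n, (x : E) - c⟫})
    (V := {x : W | ⟪n, (x : E) - c⟫ < t}) (isOpen_lt continuous_const hf)
    (isOpen_lt hf continuous_const) ?_ (hcap hn ht fun x hx => hx.ne') ?_
  · refine ⟨Set.disjoint_left.2 fun x (hU : t < _) hV => hU.not_gt hV, ?_⟩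
    exact codisjoint_iff.2 <| Set.eq_univ_of_forall fun x =>
      (Ne.lt_or_gt (x.2.2 : ⟪n, (x : E) - c⟫ ≠ t)).symm
  · convert hcap (m := -n) (s := -t) (by rwa [norm_neg]) (by rwa [abs_neg])
      (fun x hx => by rw [inner_neg_left, neg_lt_neg_iff] at hx; exact hx.ne) using 2
    simp [inner_neg_left]

theorem AffineSubspace.exists_coe_eq_setOf_inner_sub_eq_zero [FiniteDimensional ℝ E]
    {P : AffineSubspace ℝ E}
    (hP : Module.finrank ℝ P.direction + 1 = Module.finrank ℝ E) {q : E} (hq : q ∈ P) :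
    ∃ n : E, ‖n‖ = 1 ∧ (P : Set E) = {x | ⟪n, x - q⟫ = 0} := by
  have hPerp : Module.finrank ℝ P.directionᗮ = 1 := by
    have := P.direction.finrank_add_finrank_orthogonal
    omega
  obtain ⟨v, hv, hv0⟩ := Submodule.exists_mem_ne_zero_of_ne_bot (p := P.directionᗮ) fun h => by
    rw [h, finrank_bot] at hPerp
    omega
  set n := ‖v‖⁻¹ • v
  have hn : ‖n‖ = 1 := norm_smul_inv_norm (𝕜 := ℝ) hv0
  have hspan : ℝ ∙ n = P.directionᗮ :=
    Submodule.eq_of_le_of_finrank_eq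
      ((Submodule.span_singleton_le_iff_mem _ _).2 (Submodule.smul_mem _ _ hv))
      (by rw [finrank_span_singleton (norm_ne_zero_iff.1 (by simp [hn])), hPerp])
  refine ⟨n, hn, Set.ext fun x => ?_⟩
  rw [SetLike.mem_coe, ← AffineSubspace.vsub_right_mem_direction_iff_mem hq,
    ← P.direction.orthogonal_orthogonal, ← hspan,
    Submodule.mem_orthogonal_singleton_iff_inner_left, real_inner_comm]
  rfl

end InnerProductSpace

theorem sphere_minus_circle_two_components_general
    (c : EuclideanSpace ℝ (Fin 3)) (R : ℝ)
    (P : AffineSubspace ℝ (EuclideanSpace ℝ (Fin 3)))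
    (hdim : Module.finrank ℝ P.direction = 2)
    (hdist : Metric.infDist c (P : Set (EuclideanSpace ℝ (Fin 3))) < R) :
    Cardinal.mk
      (ConnectedComponents
        ↥(Metric.sphere c R \
            (Metric.sphere c R ∩ (P : Set (EuclideanSpace ℝ (Fin 3)))))) = 2 := by
  have hPne : (P : Set (EuclideanSpace ℝ (Fin 3))).Nonempty := by
    refine P.eq_bot_or_nonempty.resolve_left fun h => ?_
    rw [h, AffineSubspace.direction_bot, finrank_bot] at hdim
    omega
  obtain ⟨q, hqP, hq⟩ := (infDist_lt_iff hPne).1 hdist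
  obtain ⟨n, hn, hP⟩ := AffineSubspace.exists_coe_eq_setOf_inner_sub_eq_zero
    (by rw [hdim, finrank_euclideanSpace_fin]) hqP
  have ht : |⟪n, q - c⟫| < R := by
    calc |⟪n, q - c⟫| ≤ ‖n‖ * ‖q - c‖ := abs_real_inner_le_norm n (q - c)
      _ = dist c q := by rw [hn, one_mul, dist_comm, dist_eq_norm]
      _ < R := hq
  have hC : sphere c R ∩ (P : Set (EuclideanSpace ℝ (Fin 3))) =
      sphere c R ∩ {x | ⟪n, x - c⟫ = ⟪n, q - c⟫} := by
    simp_rw [hP, ← sub_sub_sub_cancel_right _ q c, inner_sub_right, sub_eq_zero]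
  rw [hC, Set.sdiff_self_inter]
  exact cardinalMk_connectedComponents_sphere_diff_setOf_inner_eq c hn ht

/-- Removing a single round circle from a round sphere in `ℝ³`
leaves exactly two connected components. -/
theorem sphere_minus_circle_two_components
    (c : EuclideanSpace ℝ (Fin 3)) (R : ℝ) (hR : 0 < R)
    (P : AffineSubspace ℝ (EuclideanSpace ℝ (Fin 3)))
    (hdim : Module.finrank ℝ P.direction = 2)
    (hdist : Metric.infDist c (P : Set (EuclideanSpace ℝ (Fin 3))) < R) :
    Cardinal.mk
      (ConnectedComponents
        ↥(Metric.sphere c R \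
            (Metric.sphere c R ∩ (P : Set (EuclideanSpace ℝ (Fin 3)))))) = 2 :=
  sphere_minus_circle_two_components_general c R P hdim hdist
end

section
/- Let e₁ be the first standard basis vector of EuclideanSpace ℝ (Fin 3) and let v be any fixed point of ℝ³. Then as r → ∞, the inversion in the sphere of radius r centered at r·e₁ applied to v tends to the reflection of v in the plane x = 0; that is, Tendsto (fun r => EuclideanGeometry.inversion (r • e₁) r v) atTop (𝓝 (v − 2⟨v, e₁⟩ • e₁)). For v = (x,y,z) the limit is (−x, y, z). -/
/-!
For a unit vector `e` and `s = r⁻¹`, inversion in the sphere of radius `r` centred at `r • e`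
sends `v` to `q(s)⁻¹ • (v + (‖v‖² s - 2⟪v, e⟫) • e)` with `q(s) = 1 - 2⟪v, e⟫ s + ‖v‖² s²`.
This is continuous at `s = 0`, where `q = 1`, and its value there is `v - 2⟪v, e⟫ • e`.
-/

open Filter EuclideanGeometry
open scoped RealInnerProductSpace Topology

section

variable {E : Type*} [NormedAddCommGroup E] [InnerProductSpace ℝ E]

lemma norm_sub_smul_sq_of_norm_eq_one {e : E} (he : ‖e‖ = 1) (v : E) (r : ℝ) :
    ‖v - r • e‖ ^ 2 = r ^ 2 - 2 * r * ⟪v, e⟫ + ‖v‖ ^ 2 := by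
  rw [norm_sub_sq_real, real_inner_smul_right, norm_smul, Real.norm_eq_abs, he, mul_one, sq_abs]
  ring

lemma inversion_smul_eq_inv_smul {e : E} (he : ‖e‖ = 1) {v : E} {r : ℝ} (hr : r ≠ 0)
    (hv : v ≠ r • e) :
    inversion (r • e) r v =
      (1 - 2 * ⟪v, e⟫ * r⁻¹ + ‖v‖ ^ 2 * r⁻¹ ^ 2)⁻¹ •
        (v + (‖v‖ ^ 2 * r⁻¹ - 2 * ⟪v, e⟫) • e) := by
  set Q := r ^ 2 - 2 * r * ⟪v, e⟫ + ‖v‖ ^ 2 with hQ_def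
  have hQ : Q ≠ 0 := by
    rw [hQ_def, ← norm_sub_smul_sq_of_norm_eq_one he]
    exact pow_ne_zero 2 (norm_ne_zero_iff.2 (sub_ne_zero.2 hv))
  have hq : 1 - 2 * ⟪v, e⟫ * r⁻¹ + ‖v‖ ^ 2 * r⁻¹ ^ 2 = Q / r ^ 2 := by
    field_simp
    ring
  rw [inversion, dist_eq_norm, div_pow, norm_sub_smul_sq_of_norm_eq_one he, vsub_eq_sub,
    vadd_eq_add, ← hQ_def, hq, inv_div]
  match_scalars
  · ring
  · field_simp
    linear_combination r * hQ_def

theorem tendsto_inversion_smul_atTop {e : E} (he : ‖e‖ = 1) (v : E) :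
    Tendsto (fun r : ℝ => inversion (r • e) r v) atTop (𝓝 (v - (2 * ⟪v, e⟫) • e)) := by
  set g : ℝ → E := fun s =>
    (1 - 2 * ⟪v, e⟫ * s + ‖v‖ ^ 2 * s ^ 2)⁻¹ • (v + (‖v‖ ^ 2 * s - 2 * ⟪v, e⟫) • e)
  have hg : ContinuousAt g 0 := by fun_prop (disch := norm_num)
  have hg0 : g 0 = v - (2 * ⟪v, e⟫) • e := by simp [g, sub_eq_add_neg]
  have hlim : Tendsto (fun r : ℝ => g r⁻¹) atTop (𝓝 (v - (2 * ⟪v, e⟫) • e)) :=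
    hg0 ▸ hg.tendsto.comp tendsto_inv_atTop_zero
  refine hlim.congr' ?_
  filter_upwards [eventually_gt_atTop ‖v‖] with r hr
  have hr0 : r ≠ 0 := ((norm_nonneg v).trans_lt hr).ne'
  have hv : v ≠ r • e := by
    rintro rfl
    rw [norm_smul, he, mul_one, Real.norm_eq_abs] at hr
    exact (le_abs_self r).not_gt hr
  exact (inversion_smul_eq_inv_smul he hr0 hv).symm

end

/-- As `r → ∞`, inversion in the sphere of radius `r` centered at
`r • e₁` (where `e₁` is the first standard basis vector of `ℝ³`) applied to a fixed
point `v` tends to the reflection of `v` in the plane `x = 0`. -/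
theorem inversion_tendsto_reflection (v : EuclideanSpace ℝ (Fin 3)) :
    Tendsto
      (fun r : ℝ =>
        EuclideanGeometry.inversion
          (r • EuclideanSpace.single (0 : Fin 3) (1 : ℝ)) r v)
      atTop
      (nhds (v - (2 * inner ℝ v (EuclideanSpace.single (0 : Fin 3) (1 : ℝ)) : ℝ) •
        EuclideanSpace.single (0 : Fin 3) (1 : ℝ))) :=
  tendsto_inversion_smul_atTop (by simp) v
end

section
/- Let p, w, x, y, z be points of ℝ³ with w, x, y, z all distinct from p, let t > 0, and let ρ = EuclideanGeometry.inversion p t. Then the four image points ρ(w), ρ(x), ρ(y), ρ(z) are coplanar if and only if the five points {p, w, x, y, z} are cospherical (lie on a common round sphere) or coplanar. (Coplanar with ∞ ⇄ cospherical with p.) -/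
open EuclideanGeometry

open scoped RealInnerProductSpace

local notation "E" => EuclideanSpace ℝ (Fin 3)

lemma coplanar_iff_exists_plane (S : Set E) :
    Coplanar ℝ S ↔ ∃ n : E, n ≠ 0 ∧ ∃ d : ℝ, ∀ v ∈ S, ⟪n, v⟫ = d := by
  rw [coplanar_iff_finrank_le_two]
  constructor
  · intro h
    have hne : vectorSpan ℝ S ≠ ⊤ := by
      intro htop
      rw [htop] at h
      simp [finrank_top, finrank_euclideanSpace] at h
    have : (vectorSpan ℝ S)ᗮ ≠ ⊥ := by
      rwa [Ne, Submodule.orthogonal_eq_bot_iff]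
    obtain ⟨n, hn, hn0⟩ := Submodule.exists_mem_ne_zero_of_ne_bot this
    rcases S.eq_empty_or_nonempty with rfl | ⟨v₀, hv₀⟩
    · exact ⟨n, hn0, 0, by simp⟩
    · refine ⟨n, hn0, ⟪n, v₀⟫, fun v hv => ?_⟩
      have hm : v -ᵥ v₀ ∈ vectorSpan ℝ S := vsub_mem_vectorSpan ℝ hv hv₀
      have := (Submodule.mem_orthogonal _ n).1 hn _ hm
      have : ⟪n, v - v₀⟫ = 0 := by
        rwa [real_inner_comm] at this
      rw [inner_sub_right] at this
      linarith
  · rintro ⟨n, hn0, d, hd⟩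
    have hle : vectorSpan ℝ S ≤ (ℝ ∙ n)ᗮ := by
      rw [vectorSpan_def, Submodule.span_le]
      rintro u ⟨a, ha, b, hb, rfl⟩
      rw [SetLike.mem_coe, Submodule.mem_orthogonal_singleton_iff_inner_right]
      show ⟪n, a - b⟫ = (0 : ℝ)
      rw [inner_sub_right, hd a ha, hd b hb, sub_self]
    have h2 : Module.finrank ℝ ((ℝ ∙ n)ᗮ) = 2 := by
      have := Submodule.finrank_add_finrank_orthogonal (K := (ℝ ∙ n))
      rw [finrank_span_singleton hn0, finrank_euclideanSpace] at this
      simp at this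
      omega
    calc Module.finrank ℝ (vectorSpan ℝ S) ≤ Module.finrank ℝ ((ℝ ∙ n)ᗮ) :=
          Submodule.finrank_mono hle
      _ = 2 := h2

lemma inner_inversion (n p v : E) (t : ℝ) :
    ⟪n, EuclideanGeometry.inversion p t v⟫ =
      (t / dist v p) ^ 2 * ⟪n, v - p⟫ + ⟪n, p⟫ := by
  rw [EuclideanGeometry.inversion_def]
  show ⟪n, (t / dist v p) ^ 2 • (v -ᵥ p) +ᵥ p⟫ = _
  rw [vsub_eq_sub, vadd_eq_add, inner_add_right, real_inner_smul_right]

lemma key (n p v : E) (t d : ℝ) (hv : v ≠ p) (_ht : t ≠ 0) :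
    ⟪n, EuclideanGeometry.inversion p t v⟫ = d ↔
      t ^ 2 * ⟪n, v - p⟫ = (d - ⟪n, p⟫) * ‖v - p‖ ^ 2 := by
  have h0 : ‖v - p‖ ≠ 0 := by simpa [sub_eq_zero] using hv
  rw [inner_inversion, dist_eq_norm, div_pow]
  rw [div_mul_eq_mul_div, div_add' _ _ _ (pow_ne_zero 2 h0),
    div_eq_iff (pow_ne_zero 2 h0)]
  constructor <;> intro h <;> nlinarith [h]

lemma real_eq_of_sq {a b : ℝ} (ha : 0 ≤ a) (hb : 0 ≤ b) (h : a ^ 2 = b ^ 2) : a = b := by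
  apply le_antisymm <;> nlinarith

/-- For an inversion `ρ` centered at `p`, the images
`ρ w, ρ x, ρ y, ρ z` of four points distinct from `p` are coplanar iff the five
points `{p, w, x, y, z}` are cospherical or coplanar. -/
theorem inversion_images_coplanar_iff
    (p w x y z : EuclideanSpace ℝ (Fin 3))
    (hw : w ≠ p) (hx : x ≠ p) (hy : y ≠ p) (hz : z ≠ p)
    (t : ℝ) (ht : 0 < t) :
    Coplanar ℝ
        ({EuclideanGeometry.inversion p t w, EuclideanGeometry.inversion p t x,
          EuclideanGeometry.inversion p t y, EuclideanGeometry.inversion p t z} :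
          Set (EuclideanSpace ℝ (Fin 3))) ↔
      EuclideanGeometry.Cospherical
          ({p, w, x, y, z} : Set (EuclideanSpace ℝ (Fin 3))) ∨
        Coplanar ℝ ({p, w, x, y, z} : Set (EuclideanSpace ℝ (Fin 3))) := by
  have ht0 : t ≠ 0 := ht.ne'
  have ht2 : t ^ 2 ≠ 0 := pow_ne_zero 2 ht0
  have hnw : ‖w - p‖ ≠ 0 := by simpa [sub_eq_zero] using hw
  have hnx : ‖x - p‖ ≠ 0 := by simpa [sub_eq_zero] using hx
  have hny : ‖y - p‖ ≠ 0 := by simpa [sub_eq_zero] using hy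
  have hnz : ‖z - p‖ ≠ 0 := by simpa [sub_eq_zero] using hz
  constructor
  · rw [coplanar_iff_exists_plane]
    rintro ⟨n, hn0, d, hd⟩
    have hW : t ^ 2 * ⟪n, w - p⟫ = (d - ⟪n, p⟫) * ‖w - p‖ ^ 2 :=
      (key n p w t d hw ht0).1 (hd _ (by simp))
    have hX : t ^ 2 * ⟪n, x - p⟫ = (d - ⟪n, p⟫) * ‖x - p‖ ^ 2 :=
      (key n p x t d hx ht0).1 (hd _ (by simp))
    have hY : t ^ 2 * ⟪n, y - p⟫ = (d - ⟪n, p⟫) * ‖y - p‖ ^ 2 :=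
      (key n p y t d hy ht0).1 (hd _ (by simp))
    have hZ : t ^ 2 * ⟪n, z - p⟫ = (d - ⟪n, p⟫) * ‖z - p‖ ^ 2 :=
      (key n p z t d hz ht0).1 (hd _ (by simp))
    by_cases hd' : d - ⟪n, p⟫ = 0
    · right
      rw [coplanar_iff_exists_plane]
      refine ⟨n, hn0, ⟪n, p⟫, ?_⟩
      have hzero : ∀ v : E, t ^ 2 * ⟪n, v - p⟫ = (d - ⟪n, p⟫) * ‖v - p‖ ^ 2 →
          ⟪n, v⟫ = ⟪n, p⟫ := by
        intro v hv
        rw [hd', zero_mul] at hv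
        have h1 : ⟪n, v - p⟫ = 0 := by
          have := mul_eq_zero.1 hv
          tauto
        rw [inner_sub_right] at h1
        linarith
      rintro v hv
      simp only [Set.mem_insert_iff, Set.mem_singleton_iff] at hv
      rcases hv with rfl | rfl | rfl | rfl | rfl
      · rfl
      · exact hzero _ hW
      · exact hzero _ hX
      · exact hzero _ hY
      · exact hzero _ hZ
    · left
      set m : E := (t ^ 2 / (2 * (d - ⟪n, p⟫))) • n with hm
      refine ⟨m + p, ‖m‖, ?_⟩
      have hsph : ∀ v : E, ‖v - p‖ ≠ 0 →
          t ^ 2 * ⟪n, v - p⟫ = (d - ⟪n, p⟫) * ‖v - p‖ ^ 2 →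
          dist v (m + p) = ‖m‖ := by
        intro v hv0 hv
        have hvm : v - (m + p) = (v - p) - m := by abel
        have hip : ⟪v - p, m⟫ = ‖v - p‖ ^ 2 / 2 := by
          rw [hm, real_inner_smul_right, real_inner_comm n (v - p), div_mul_eq_mul_div, hv,
            mul_comm (2 : ℝ) (d - ⟪n, p⟫), ← div_div, mul_div_cancel_left₀ _ hd']
        have hsq : ‖(v - p) - m‖ ^ 2 = ‖m‖ ^ 2 := by
          rw [norm_sub_sq_real]
          linarith [hip]
        rw [dist_eq_norm, hvm]
        exact real_eq_of_sq (norm_nonneg _) (norm_nonneg _) hsq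
      rintro v hv
      simp only [Set.mem_insert_iff, Set.mem_singleton_iff] at hv
      rcases hv with rfl | rfl | rfl | rfl | rfl
      · rw [dist_eq_norm]
        have : v - (m + v) = -m := by abel
        rw [this, norm_neg]
      · exact hsph _ hnw hW
      · exact hsph _ hnx hX
      · exact hsph _ hny hY
      · exact hsph _ hnz hZ
  · rintro (⟨c, r, hc⟩ | hcop)
    · have hp' : dist p c = r := hc _ (by simp)
      have hmne : c - p ≠ 0 := by
        intro h
        have hcp : c = p := sub_eq_zero.1 h
        have hr : r = 0 := by rw [← hp', hcp, dist_self]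
        have hwc := hc w (by simp)
        rw [hcp, hr, dist_eq_zero] at hwc
        exact hw hwc
      set m : E := c - p with hm
      have hsph : ∀ v : E, dist v c = r → ‖v - p‖ ^ 2 = 2 * ⟪m, v - p⟫ := by
        intro v hv
        have e1 : (v - p) - m = v - c := by rw [hm]; abel
        have e3 : ‖m‖ = r := by
          rw [hm, ← neg_sub p c, norm_neg, ← dist_eq_norm]
          exact hp'
        have h1 : ‖(v - p) - m‖ ^ 2 = ‖m‖ ^ 2 := by
          rw [e1, e3, ← dist_eq_norm, hv]
        rw [norm_sub_sq_real] at h1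
        rw [real_inner_comm]
        linarith
      rw [coplanar_iff_exists_plane]
      refine ⟨m, hmne, t ^ 2 / 2 + ⟪m, p⟫, ?_⟩
      rintro v hv
      simp only [Set.mem_insert_iff, Set.mem_singleton_iff] at hv
      have hgen : ∀ u : E, u ≠ p → dist u c = r →
          ⟪m, EuclideanGeometry.inversion p t u⟫ = t ^ 2 / 2 + ⟪m, p⟫ := by
        intro u hu hud
        rw [key m p u t _ hu ht0]
        have := hsph u hud
        rw [this]
        ring
      rcases hv with rfl | rfl | rfl | rfl
      · exact hgen w hw (hc _ (by simp))
      · exact hgen x hx (hc _ (by simp))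
      · exact hgen y hy (hc _ (by simp))
      · exact hgen z hz (hc _ (by simp))
    · rw [coplanar_iff_exists_plane] at hcop ⊢
      obtain ⟨n, hn0, d, hd⟩ := hcop
      refine ⟨n, hn0, d, ?_⟩
      have hp' : ⟪n, p⟫ = d := hd _ (by simp)
      have hgen : ∀ u : E, u ≠ p → ⟪n, u⟫ = d →
          ⟪n, EuclideanGeometry.inversion p t u⟫ = d := by
        intro u hu hud
        rw [key n p u t d hu ht0, inner_sub_right, hud, hp']
        ring
      rintro v hv
      simp only [Set.mem_insert_iff, Set.mem_singleton_iff] at hv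
      rcases hv with rfl | rfl | rfl | rfl
      · exact hgen w hw (hd _ (by simp))
      · exact hgen x hx (hd _ (by simp))
      · exact hgen y hy (hd _ (by simp))
      · exact hgen z hz (hd _ (by simp))
end

section
/- Let p, w, x, y, z be points of ℝ³ with w, x, y, z all distinct from p, let t > 0, and let ρ = EuclideanGeometry.inversion p t. Then the four image points ρ(w), ρ(x), ρ(y), ρ(z) are collinear if and only if the five points {p, w, x, y, z} are concyclic (i.e. simultaneously cospherical and coplanar, lying on a common round circle) or collinear. -/
/-!
Inversion centred at `c` maps every affine subspace through `c` into itself, and exchanges spheres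
through `c` with hyperplanes not through `c`. If the images are collinear while the points together
with `c` are not, the line `ℓ` spanned by the images misses `c`, so it lies in the perpendicular
bisector of `c` and its reflection in `ℓ`; hence the points lie on a sphere through `c`, and in the
plane spanned by `c` and `ℓ`. Conversely, points of a circle through `c` are mapped both into the
plane of the circle and into a hyperplane missing `c`, which meet in a line.
-/

open EuclideanGeometry AffineSubspace Set

section Affine

variable {k V P : Type*} [DivisionRing k] [AddCommGroup V] [Module k V] [AddTorsor V P]
  {s t : Set P}

theorem Collinear.of_subset_affineSpan (ht : t ⊆ affineSpan k s) (hs : Collinear k s) :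
    Collinear k t :=
  Collinear.subset ht (by rwa [Collinear, ← direction, direction_affineSpan])

theorem Coplanar.of_subset_affineSpan (ht : t ⊆ affineSpan k s) (hs : Coplanar k s) :
    Coplanar k t :=
  Coplanar.subset ht (by rwa [Coplanar, ← direction, direction_affineSpan])

theorem Coplanar.collinear_of_subset_inf {H : AffineSubspace k P} {c : P} (hs : Coplanar k s)
    (hc : c ∈ s) (hcH : c ∉ H) (ht : t ⊆ affineSpan k s ⊓ H) : Collinear k t := by
  rcases t.eq_empty_or_nonempty with rfl | ⟨q, hq⟩
  · exact collinear_empty k P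
  have : FiniteDimensional k (vectorSpan k s) := hs.finiteDimensional_vectorSpan
  have hlt : affineSpan k s ⊓ H < affineSpan k s :=
    inf_le_left.lt_of_ne fun h => hcH (h.ge (mem_affineSpan k hc)).2
  have hdir := direction_lt_of_nonempty hlt ⟨q, ht hq⟩
  rw [direction_affineSpan] at hdir
  have hts : vectorSpan k t ≤ (affineSpan k s ⊓ H).direction := vectorSpan_mono k ht
  have : FiniteDimensional k (affineSpan k s ⊓ H).direction :=
    Submodule.finiteDimensional_of_le hdir.le
  have : FiniteDimensional k (vectorSpan k t) := Submodule.finiteDimensional_of_le hts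
  rw [collinear_iff_finrank_le_one]
  have h_t := Submodule.finrank_mono hts
  have h_lt := Submodule.finrank_lt_finrank_of_lt hdir
  have h_s := hs.finrank_le_two
  omega

end Affine

section Inversion

variable {V P : Type*} [NormedAddCommGroup V] [InnerProductSpace ℝ V] [MetricSpace P]
  [NormedAddTorsor V P] {c : P} {R : ℝ} {s : Set P}

theorem image_inversion_subset_affineSpan_insert (c : P) (R : ℝ) (s : Set P) :
    inversion c R '' s ⊆ affineSpan ℝ (insert c s) :=
  ((mapsTo_inversion_affineSubspace_of_mem (mem_affineSpan ℝ (mem_insert c s))).mono_left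
    ((subset_insert c s).trans (subset_affineSpan ℝ _))).image_subset

theorem subset_affineSpan_insert_image_inversion (hR : R ≠ 0) (c : P) (s : Set P) :
    s ⊆ affineSpan ℝ (insert c (inversion c R '' s)) := by
  simpa only [image_image, inversion_inversion c hR, image_id'] using
    image_inversion_subset_affineSpan_insert c R (inversion c R '' s)

theorem Collinear.image_inversion (h : Collinear ℝ (insert c s)) :
    Collinear ℝ (inversion c R '' s) :=
  h.of_subset_affineSpan (image_inversion_subset_affineSpan_insert c R s)

theorem coplanar_insert_of_collinear_image_inversion (hR : R ≠ 0)
    (h : Collinear ℝ (inversion c R '' s)) : Coplanar ℝ (insert c s) :=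
  (h.coplanar_insert c).of_subset_affineSpan <| insert_subset
    (mem_affineSpan ℝ (mem_insert c _)) (subset_affineSpan_insert_image_inversion hR c s)

theorem cospherical_insert_of_image_inversion_subset {ℓ : AffineSubspace ℝ P} [Nonempty ℓ]
    [ℓ.direction.HasOrthogonalProjection] (hR : R ≠ 0) (hc : c ∉ ℓ)
    (hs : inversion c R '' s ⊆ ℓ) : Cospherical (insert c s) := by
  set y := reflection ℓ c
  have hy : y ≠ c := (reflection_eq_self_iff c).not.2 hc
  have hℓ : (ℓ : Set P) ⊆ perpBisector c y := fun q hq =>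
    mem_perpBisector_iff_dist_eq.2 (dist_reflection_eq_of_mem ℓ hq c).symm
  refine ⟨inversion c R y, R ^ 2 / dist y c, forall_mem_insert.2 ⟨?_, fun b hb => ?_⟩⟩
  · rw [dist_center_inversion, dist_comm]
  · have : b ∈ inversion c R ⁻¹' perpBisector c y := hℓ (hs (mem_image_of_mem _ hb))
    rw [preimage_inversion_perpBisector hR hy] at this
    exact this.1

theorem EuclideanGeometry.Concyclic.collinear_image_inversion (hR : R ≠ 0) (hcs : c ∉ s)
    (h : Concyclic (insert c s)) : Collinear ℝ (inversion c R '' s) := by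
  obtain ⟨o, r, hor⟩ := h.Cospherical
  have hsph : ∀ b ∈ s, dist b o = dist o c := fun b hb => by
    rw [hor b (mem_insert_of_mem c hb), ← hor c (mem_insert c s), dist_comm]
  rcases eq_or_ne o c with rfl | hoc
  · have : s = ∅ := eq_empty_of_forall_notMem fun b hb =>
      hcs (dist_eq_zero.1 ((hsph b hb).trans (dist_self o)) ▸ hb)
    simp [this, collinear_empty]
  refine h.Coplanar.collinear_of_subset_inf (mem_insert c s)
    (H := perpBisector c (inversion c R o)) ?_ ?_
  · rw [left_mem_perpBisector]
    exact fun hco => hoc ((center_eq_inversion hR).1 hco)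
  · rintro _ ⟨b, hb, rfl⟩
    refine (mem_inf_iff _ _ _).2
      ⟨image_inversion_subset_affineSpan_insert c R s (mem_image_of_mem _ hb), ?_⟩
    exact (inversion_mem_perpBisector_inversion_iff hR (ne_of_mem_of_not_mem hb hcs) hoc).2
      (hsph b hb)

theorem collinear_image_inversion_iff (hR : R ≠ 0) (hcs : c ∉ s) :
    Collinear ℝ (inversion c R '' s) ↔ Concyclic (insert c s) ∨ Collinear ℝ (insert c s) := by
  refine ⟨fun h => or_iff_not_imp_right.2 fun hnc =>
      ⟨?_, coplanar_insert_of_collinear_image_inversion hR h⟩,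
    fun h => h.elim (·.collinear_image_inversion hR hcs) (·.image_inversion)⟩
  set ℓ := affineSpan ℝ (inversion c R '' s)
  have hc : c ∉ ℓ := fun hc => hnc <| h.of_subset_affineSpan <| insert_subset hc <| by
    simpa only [affineSpan_insert_eq_affineSpan ℝ hc] using
      subset_affineSpan_insert_image_inversion hR c s
  have : Nonempty ℓ := by
    refine ((affineSpan_nonempty ℝ).2 (Nonempty.image _ ?_)).to_subtype
    exact nonempty_iff_ne_empty.2 fun hs => hnc (by simp [hs, collinear_singleton])
  have := h.finiteDimensional_direction_affineSpan
  exact cospherical_insert_of_image_inversion_subset hR hc (subset_affineSpan ℝ _)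

end Inversion

/-- For an inversion `ρ` centered at `p`, the images
`ρ w, ρ x, ρ y, ρ z` of four points distinct from `p` are collinear iff the five
points `{p, w, x, y, z}` are concyclic or collinear. -/
theorem inversion_images_collinear_iff
    (p w x y z : EuclideanSpace ℝ (Fin 3))
    (hw : w ≠ p) (hx : x ≠ p) (hy : y ≠ p) (hz : z ≠ p)
    (t : ℝ) (ht : 0 < t) :
    Collinear ℝ
        ({EuclideanGeometry.inversion p t w, EuclideanGeometry.inversion p t x,
          EuclideanGeometry.inversion p t y, EuclideanGeometry.inversion p t z} :
          Set (EuclideanSpace ℝ (Fin 3))) ↔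
      EuclideanGeometry.Concyclic
          ({p, w, x, y, z} : Set (EuclideanSpace ℝ (Fin 3))) ∨
        Collinear ℝ ({p, w, x, y, z} : Set (EuclideanSpace ℝ (Fin 3))) := by
  have hp : p ∉ ({w, x, y, z} : Set (EuclideanSpace ℝ (Fin 3))) := by
    simp [hw.symm, hx.symm, hy.symm, hz.symm]
  simpa only [image_insert_eq, image_singleton] using collinear_image_inversion_iff ht.ne' hp
end
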